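/- Let W be a weak fundamental localizer. The class of W-exact squares is the smallest class of squares in Cat that is stable under horizontal composition, satisfies the local descent condition (CS3h), contains all comma squares, and contains every square of the form (top u : A → B with u W-coaspherical, left A → e, right B → e, bottom id_e, identity 2-cell). -/

import Mathlib

open CategoryTheory

universe u

namespace Paper

/-- A class of functors between small categories. -/
abbrev FunctorClass : Type (u + 1) :=
  ∀ ⦃A B : Type u⦄ [SmallCategory A] [SmallCategory B], (A ⥤ B) → Prop

/-- The punctual category `e`. -/
abbrev PtCat : Type u := Discrete PUnit.{u + 1}

/-- The category `A` is `W`-aspherical: the functor `A ⥤ e` lies in `W`. -/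
def IsAsphericalCat (W : FunctorClass.{u}) (A : Type u) [SmallCategory A] : Prop :=
  W (Functor.star A)

/-- The functor `F : A ⥤ B` is `W`-aspherical: every comma category `A/b` is `W`-aspherical. -/
def IsAsphericalFunctor (W : FunctorClass.{u}) {A B : Type u} [SmallCategory A]
    [SmallCategory B] (F : A ⥤ B) : Prop :=
  ∀ b : B, IsAsphericalCat W (CostructuredArrow F b)

/-- The functor `F : A ⥤ B` is `W`-coaspherical: every comma category `b\A` is `W`-aspherical. -/
def IsCoasphericalFunctor (W : FunctorClass.{u}) {A B : Type u} [SmallCategory A]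
    [SmallCategory B] (F : A ⥤ B) : Prop :=
  ∀ b : B, IsAsphericalCat W (StructuredArrow b F)

/-- For `F : A ⥤ B` and `b : B`, the induced functor `A/b ⥤ B/b`. -/
def sliceInduced {A B : Type u} [SmallCategory A] [SmallCategory B] (F : A ⥤ B) (b : B) :
    CostructuredArrow F b ⥤ Over b where
  obj x := Over.mk x.hom
  map {x y} f := Over.homMk (F.map f.left) (by simp [CostructuredArrow.w f])

/-- For a strictly commutative triangle given by `F : A ⥤ B`, `G : B ⥤ C` and `c : C`,
the induced functor `A/c ⥤ B/c`. -/
def triangleSlice {A B C : Type u} [SmallCategory A] [SmallCategory B] [SmallCategory C]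
    (F : A ⥤ B) (G : B ⥤ C) (c : C) :
    CostructuredArrow (F ⋙ G) c ⥤ CostructuredArrow G c where
  obj x := CostructuredArrow.mk (Y := F.obj x.left) x.hom
  map {x y} f := CostructuredArrow.homMk (F.map f.left) (CostructuredArrow.w f)

/-- For a strictly commutative triangle given by `F : A ⥤ B`, `G : B ⥤ C` and `c : C`,
the induced functor `c\A ⥤ c\B`. -/
def triangleCoslice {A B C : Type u} [SmallCategory A] [SmallCategory B] [SmallCategory C]
    (F : A ⥤ B) (G : B ⥤ C) (c : C) :
    StructuredArrow c (F ⋙ G) ⥤ StructuredArrow c G where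
  obj x := StructuredArrow.mk (Y := F.obj x.right) x.hom
  map {x y} f := StructuredArrow.homMk (F.map f.right) (StructuredArrow.w f)


/-- `W` is a weak fundamental localizer. -/
structure IsWeakFundamentalLocalizer (W : FunctorClass.{u}) : Prop where
  id_mem : ∀ (A : Type u) [SmallCategory A], W (𝟭 A)
  comp_mem : ∀ {A B C : Type u} [SmallCategory A] [SmallCategory B] [SmallCategory C]
      (F : A ⥤ B) (G : B ⥤ C), W F → W G → W (F ⋙ G)
  of_comp_left : ∀ {A B C : Type u} [SmallCategory A] [SmallCategory B] [SmallCategory C]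
      (F : A ⥤ B) (G : B ⥤ C), W F → W (F ⋙ G) → W G
  of_comp_right : ∀ {A B C : Type u} [SmallCategory A] [SmallCategory B] [SmallCategory C]
      (F : A ⥤ B) (G : B ⥤ C), W G → W (F ⋙ G) → W F
  retract_mem : ∀ {A A' : Type u} [SmallCategory A] [SmallCategory A']
      (i : A' ⥤ A) (r : A ⥤ A'), i ⋙ r = 𝟭 A' → W (r ⋙ i) → W r
  star_mem : ∀ (A : Type u) [SmallCategory A], Limits.HasTerminal A → W (Functor.star A)
  mem_of_slices : ∀ {A B : Type u} [SmallCategory A] [SmallCategory B] (F : A ⥤ B),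
      (∀ b : B, W (sliceInduced F b)) → W F

/-- `W` is a fundamental localizer. -/
structure IsFundamentalLocalizer (W : FunctorClass.{u}) : Prop where
  id_mem : ∀ (A : Type u) [SmallCategory A], W (𝟭 A)
  comp_mem : ∀ {A B C : Type u} [SmallCategory A] [SmallCategory B] [SmallCategory C]
      (F : A ⥤ B) (G : B ⥤ C), W F → W G → W (F ⋙ G)
  of_comp_left : ∀ {A B C : Type u} [SmallCategory A] [SmallCategory B] [SmallCategory C]
      (F : A ⥤ B) (G : B ⥤ C), W F → W (F ⋙ G) → W G
  of_comp_right : ∀ {A B C : Type u} [SmallCategory A] [SmallCategory B] [SmallCategory C]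
      (F : A ⥤ B) (G : B ⥤ C), W G → W (F ⋙ G) → W F
  retract_mem : ∀ {A A' : Type u} [SmallCategory A] [SmallCategory A']
      (i : A' ⥤ A) (r : A ⥤ A'), i ⋙ r = 𝟭 A' → W (r ⋙ i) → W r
  star_mem : ∀ (A : Type u) [SmallCategory A], Limits.HasTerminal A → W (Functor.star A)
  mem_of_rel_slices : ∀ {A B C : Type u} [SmallCategory A] [SmallCategory B] [SmallCategory C]
      (F : A ⥤ B) (G : B ⥤ C), (∀ c : C, W (triangleSlice F G c)) → W F


section Squares

variable {A A' B B' : Type u} [SmallCategory A] [SmallCategory A']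
  [SmallCategory B] [SmallCategory B']

/-- The functor `A'/b' ⥤ A/w(b')` induced by a square `(u, u', v, w, α)`. -/
def squareSlice (u : A ⥤ B) (u' : A' ⥤ B') (v : A' ⥤ A) (w : B' ⥤ B)
    (α : v ⋙ u ⟶ u' ⋙ w) (b' : B') :
    CostructuredArrow u' b' ⥤ CostructuredArrow u (w.obj b') where
  obj x := CostructuredArrow.mk (Y := v.obj x.left) (α.app x.left ≫ w.map x.hom)
  map {x y} f := CostructuredArrow.homMk (v.map f.left) (by
    have h := α.naturality f.left
    dsimp at h ⊢
    rw [← Category.assoc, h, Category.assoc, ← Functor.map_comp, CostructuredArrow.w f])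

/-- The functor `a\A' ⥤ u(a)\B'` induced by a square `(u, u', v, w, α)`. -/
def squareCoslice (u : A ⥤ B) (u' : A' ⥤ B') (v : A' ⥤ A) (w : B' ⥤ B)
    (α : v ⋙ u ⟶ u' ⋙ w) (a : A) :
    StructuredArrow a v ⥤ StructuredArrow (u.obj a) w where
  obj x := StructuredArrow.mk (Y := u'.obj x.right) (u.map x.hom ≫ α.app x.right)
  map {x y} f := StructuredArrow.homMk (u'.map f.right) (by
    have h := α.naturality f.right
    dsimp at h ⊢
    rw [Category.assoc, ← h, ← Category.assoc, ← Functor.map_comp, StructuredArrow.w f])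

/-- The category `A'_{(a, b', g)}` attached to a square `(u, u', v, w, α)` and a triple
`(a, b', g : u(a) ⟶ w(b'))`. -/
structure SquareFiber (u : A ⥤ B) (u' : A' ⥤ B') (v : A' ⥤ A) (w : B' ⥤ B)
    (α : v ⋙ u ⟶ u' ⋙ w) (a : A) (b' : B') (g : u.obj a ⟶ w.obj b') : Type u where
  pt : A'
  f : a ⟶ v.obj pt
  g' : u'.obj pt ⟶ b'
  fac : u.map f ≫ α.app pt ≫ w.map g' = g

instance (u : A ⥤ B) (u' : A' ⥤ B') (v : A' ⥤ A) (w : B' ⥤ B)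
    (α : v ⋙ u ⟶ u' ⋙ w) (a : A) (b' : B') (g : u.obj a ⟶ w.obj b') :
    Category (SquareFiber u u' v w α a b' g) where
  Hom x y := { h : x.pt ⟶ y.pt // x.f ≫ v.map h = y.f ∧ u'.map h ≫ y.g' = x.g' }
  id x := ⟨𝟙 x.pt, by simp, by simp⟩
  comp {x y z} f g := ⟨f.1 ≫ g.1, by
      rw [Functor.map_comp, ← Category.assoc, f.2.1, g.2.1], by
      rw [Functor.map_comp, Category.assoc, g.2.2, f.2.2]⟩
  id_comp f := by apply Subtype.ext; simp
  comp_id f := by apply Subtype.ext; simp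
  assoc f g h := by apply Subtype.ext; simp

/-- A square `(u, u', v, w, α)` is `W`-exact. -/
def IsExactSquare (W : FunctorClass.{u}) (u : A ⥤ B) (u' : A' ⥤ B') (v : A' ⥤ A)
    (w : B' ⥤ B) (α : v ⋙ u ⟶ u' ⋙ w) : Prop :=
  ∀ b' : B', IsCoasphericalFunctor W (squareSlice u u' v w α b')

/-- The 2-cell of the opposite square. -/
def squareOpCell (u : A ⥤ B) (u' : A' ⥤ B') (v : A' ⥤ A) (w : B' ⥤ B)
    (α : v ⋙ u ⟶ u' ⋙ w) : u'.op ⋙ w.op ⟶ v.op ⋙ u.op :=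
  NatTrans.op α

end Squares

section Comps

/-- The 2-cell of the horizontal composite of two squares. -/
def hcomp2cell {A A' A'' B B' B'' : Type u}
    [SmallCategory A] [SmallCategory A'] [SmallCategory A'']
    [SmallCategory B] [SmallCategory B'] [SmallCategory B'']
    {u : A ⥤ B} {u' : A' ⥤ B'} {u'' : A'' ⥤ B''}
    {v : A' ⥤ A} {w : B' ⥤ B} {v' : A'' ⥤ A'} {w' : B'' ⥤ B'}
    (α : v ⋙ u ⟶ u' ⋙ w) (α' : v' ⋙ u' ⟶ u'' ⋙ w') :
    (v' ⋙ v) ⋙ u ⟶ u'' ⋙ (w' ⋙ w) :=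
  Functor.whiskerLeft v' α ≫ Functor.whiskerRight α' w

/-- The 2-cell of the vertical composite of two squares. -/
def vcomp2cell {A A' B B' C C' : Type u}
    [SmallCategory A] [SmallCategory A'] [SmallCategory B] [SmallCategory B']
    [SmallCategory C] [SmallCategory C']
    {u : A ⥤ B} {u' : A' ⥤ B'} {v : A' ⥤ A} {w : B' ⥤ B}
    {x : B ⥤ C} {x' : B' ⥤ C'} {y : C' ⥤ C}
    (α : v ⋙ u ⟶ u' ⋙ w) (β : w ⋙ x ⟶ x' ⋙ y) :
    v ⋙ (u ⋙ x) ⟶ (u' ⋙ x') ⋙ y :=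
  Functor.whiskerRight α x ≫ Functor.whiskerLeft u' β

end Comps

section Fibers

variable {A B : Type u} [SmallCategory A] [SmallCategory B]

/-- The fiber `A_b` of `F : A ⥤ B` at `b : B`. -/
structure CatFiber (F : A ⥤ B) (b : B) : Type u where
  obj : A
  eq : F.obj obj = b

instance (F : A ⥤ B) (b : B) : Category (CatFiber F b) where
  Hom x y := { f : x.obj ⟶ y.obj // F.map f = eqToHom (x.eq.trans y.eq.symm) }
  id x := ⟨𝟙 x.obj, by simp⟩
  comp {x y z} f g := ⟨f.1 ≫ g.1, by rw [Functor.map_comp, f.2, g.2, eqToHom_trans]⟩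
  id_comp f := by apply Subtype.ext; simp
  comp_id f := by apply Subtype.ext; simp
  assoc f g h := by apply Subtype.ext; simp

/-- The canonical functor `A_b ⥤ A/b`. -/
def fiberToSlice (F : A ⥤ B) (b : B) : CatFiber F b ⥤ CostructuredArrow F b where
  obj x := CostructuredArrow.mk (Y := x.obj) (eqToHom x.eq)
  map {x y} f := CostructuredArrow.homMk f.1 (by simp [f.2])

/-- The canonical functor `A_b ⥤ b\A`. -/
def fiberToCoslice (F : A ⥤ B) (b : B) : CatFiber F b ⥤ StructuredArrow b F where
  obj x := StructuredArrow.mk (Y := x.obj) (eqToHom x.eq.symm)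
  map {x y} f := StructuredArrow.homMk f.1 (by simp [f.2])

/-- The functor `F` is `W`-proper. -/
def IsProper (W : FunctorClass.{u}) (F : A ⥤ B) : Prop :=
  ∀ b : B, IsCoasphericalFunctor W (fiberToSlice F b)

/-- The functor `F` is `W`-smooth. -/
def IsSmooth (W : FunctorClass.{u}) (F : A ⥤ B) : Prop :=
  ∀ b : B, IsAsphericalFunctor W (fiberToCoslice F b)

/-- The functor `F` is a precofibration: each canonical functor `A_b ⥤ A/b` admits a left
adjoint. -/
def IsPrecofibration (F : A ⥤ B) : Prop :=
  ∀ b : B, (fiberToSlice F b).IsRightAdjoint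

end Fibers

/-- `F` is an isomorphism of categories. -/
def IsCatIso {A B : Type u} [SmallCategory A] [SmallCategory B] (F : A ⥤ B) : Prop :=
  ∃ G : B ⥤ A, F ⋙ G = 𝟭 A ∧ G ⋙ F = 𝟭 B

section Pullback

variable {A B B' : Type u} [SmallCategory A] [SmallCategory B] [SmallCategory B']

/-- The strict pullback `B' ×_B A` of `u : A ⥤ B` and `w : B' ⥤ B`. -/
structure CatPullback (u : A ⥤ B) (w : B' ⥤ B) : Type u where
  fst : B'
  snd : A
  eq : w.obj fst = u.obj snd

instance (u : A ⥤ B) (w : B' ⥤ B) : Category (CatPullback u w) where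
  Hom x y := { p : (x.fst ⟶ y.fst) × (x.snd ⟶ y.snd) //
    w.map p.1 ≫ eqToHom y.eq = eqToHom x.eq ≫ u.map p.2 }
  id x := ⟨(𝟙 x.fst, 𝟙 x.snd), by simp⟩
  comp {x y z} f g := ⟨(f.1.1 ≫ g.1.1, f.1.2 ≫ g.1.2), by
    rw [Functor.map_comp, Functor.map_comp, Category.assoc, g.2, ← Category.assoc, f.2,
      Category.assoc]⟩
  id_comp f := by apply Subtype.ext; simp
  comp_id f := by apply Subtype.ext; simp
  assoc f g h := by apply Subtype.ext; simp

/-- First projection of the strict pullback. -/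
def pbFst (u : A ⥤ B) (w : B' ⥤ B) : CatPullback u w ⥤ B' where
  obj x := x.fst
  map f := f.1.1

/-- Second projection of the strict pullback. -/
def pbSnd (u : A ⥤ B) (w : B' ⥤ B) : CatPullback u w ⥤ A where
  obj x := x.snd
  map f := f.1.2

theorem pb_comm (u : A ⥤ B) (w : B' ⥤ B) : pbSnd u w ⋙ u = pbFst u w ⋙ w := by
  have hobj : ∀ x : CatPullback u w, (pbSnd u w ⋙ u).obj x = (pbFst u w ⋙ w).obj x :=
    fun x => x.eq.symm
  refine CategoryTheory.Functor.ext hobj (fun x y f => ?_)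
  have h := f.2
  dsimp only [Functor.comp_map, pbFst, pbSnd]
  rw [h]
  simp
  first
    | (rw [← Category.assoc]; erw [eqToHom_trans, eqToHom_refl, Category.id_comp])
    | (dsimp only [Functor.comp_obj, pbFst, pbSnd]; rw [eqToHom_trans_assoc, eqToHom_refl, Category.id_comp])
    | (rw [← Category.assoc]; convert (Category.id_comp (u.map f.1.2)).symm; simp)

/-- The comparison functor from the top-left corner of a commutative square to the
strict pullback. -/
def toPullback {A' : Type u} [SmallCategory A'] (u : A ⥤ B) (u' : A' ⥤ B') (v : A' ⥤ A)
    (w : B' ⥤ B) (h : v ⋙ u = u' ⋙ w) : A' ⥤ CatPullback u w where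
  obj a' := ⟨u'.obj a', v.obj a', (Functor.congr_obj h a').symm⟩
  map {x y} f := ⟨(u'.map f, v.map f), by
    have := Functor.congr_hom h f
    dsimp at this
    rw [this]
    simp⟩
  map_id x := by
    apply Subtype.ext
    show (u'.map (𝟙 x), v.map (𝟙 x)) = (𝟙 _, 𝟙 _)
    simp
  map_comp f g := by
    apply Subtype.ext
    show (u'.map _, v.map _) = (u'.map _ ≫ u'.map _, v.map _ ≫ v.map _)
    simp

end Pullback

section BaseChange

variable {A A' B B' : Type u} [SmallCategory A] [SmallCategory A']
  [SmallCategory B] [SmallCategory B']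

/-- The base-change morphism `v ∘ r' ⟶ r ∘ w` associated with a square whose vertical
edges admit right adjoints. -/
def baseChangeR {u : A ⥤ B} {u' : A' ⥤ B'} {v : A' ⥤ A} {w : B' ⥤ B}
    {r : B ⥤ A} {r' : B' ⥤ A'} (adj : u ⊣ r) (adj' : u' ⊣ r')
    (α : v ⋙ u ⟶ u' ⋙ w) : r' ⋙ v ⟶ w ⋙ r :=
  Functor.whiskerLeft (r' ⋙ v) adj.unit ≫ Functor.whiskerLeft r' (Functor.whiskerRight α r) ≫
    Functor.whiskerRight adj'.counit (w ⋙ r)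

/-- The base-change morphism `w'' ∘ u ⟶ u' ∘ v''` associated with a square whose horizontal
edges admit left adjoints. -/
def baseChangeL {u : A ⥤ B} {u' : A' ⥤ B'} {v : A' ⥤ A} {w : B' ⥤ B}
    {v'' : A ⥤ A'} {w'' : B ⥤ B'} (adjv : v'' ⊣ v) (adjw : w'' ⊣ w)
    (α : v ⋙ u ⟶ u' ⋙ w) : u ⋙ w'' ⟶ v'' ⋙ u' :=
  Functor.whiskerRight adjv.unit (u ⋙ w'') ≫ Functor.whiskerLeft v'' (Functor.whiskerRight α w'') ≫
    Functor.whiskerLeft (v'' ⋙ u') adjw.counit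

end BaseChange

section LocColoc

variable {X Y C : Type u} [SmallCategory X] [SmallCategory Y] [SmallCategory C]

/-- `F : X ⥤ Y`, viewed over `C` via `P : Y ⥤ C` (and `F ⋙ P` on `X`), is a `W`-equivalence
locally on `C`. -/
def IsLocallyEquiv (W : FunctorClass.{u}) (F : X ⥤ Y) (P : Y ⥤ C) : Prop :=
  ∀ c : C, W (triangleSlice F P c)

/-- `F : X ⥤ Y`, viewed over `C` via `P : Y ⥤ C` (and `F ⋙ P` on `X`), is a `W`-equivalence
colocally on `C`. -/
def IsColocallyEquiv (W : FunctorClass.{u}) (F : X ⥤ Y) (P : Y ⥤ C) : Prop :=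
  ∀ c : C, W (triangleCoslice F P c)

end LocColoc

/-- A square `(u, u', v, w, α)` is weakly `W`-exact. -/
def IsWeakExactSquare (W : FunctorClass.{u}) {A A' B B' : Type u} [SmallCategory A]
    [SmallCategory A'] [SmallCategory B] [SmallCategory B'] (u : A ⥤ B) (u' : A' ⥤ B')
    (v : A' ⥤ A) (w : B' ⥤ B) (α : v ⋙ u ⟶ u' ⋙ w) : Prop :=
  ∀ b' : B', IsColocallyEquiv W (squareSlice u u' v w α b') (CostructuredArrow.proj u (w.obj b'))

/-- `w : B' ⥤ B` is a discrete fibration. -/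
def IsDiscreteFibration {B' B : Type u} [SmallCategory B'] [SmallCategory B]
    (w : B' ⥤ B) : Prop :=
  ∀ (b' : B') (b : B) (g : b ⟶ w.obj b'),
    ∃! p : Σ b₀ : B', b₀ ⟶ b', ∃ h : w.obj p.1 = b, w.map p.2 = eqToHom h ≫ g

/-- The coarse fundamental localizer: functors whose source and target are both empty or
both nonempty. -/
def coarseLocalizer : FunctorClass.{u} :=
  @fun A B _ _ _ => Nonempty A ↔ Nonempty B

/-- The map induced on sets of connected components. -/
def π₀map {A B : Type u} [SmallCategory A] [SmallCategory B] (F : A ⥤ B) :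
    ConnectedComponents A → ConnectedComponents B :=
  F.mapConnectedComponents

/-- The fundamental localizer `W₀` of `0`-equivalences: functors inducing a bijection on
connected components. -/
def W₀ : FunctorClass.{u} :=
  @fun _ _ _ _ F => Function.Bijective (π₀map F)

/-- A square in `Cat`: four small categories, four functors and a `2`-cell
`α : u ∘ v ⟶ w ∘ u'`. -/
structure CatSquare : Type (u + 1) where
  {A' : Type u}
  {A : Type u}
  {B' : Type u}
  {B : Type u}
  [instA' : SmallCategory A']
  [instA : SmallCategory A]
  [instB' : SmallCategory B']
  [instB : SmallCategory B]
  u : A ⥤ B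
  u' : A' ⥤ B'
  v : A' ⥤ A
  w : B' ⥤ B
  α : v ⋙ u ⟶ u' ⋙ w

attribute [instance] CatSquare.instA' CatSquare.instA CatSquare.instB' CatSquare.instB

/-- A bundled square is `W`-exact. -/
def CatSquare.IsExact (W : FunctorClass.{u}) (S : CatSquare.{u}) : Prop :=
  IsExactSquare W S.u S.u' S.v S.w S.α

/-- The opposite of a square. -/
def CatSquare.op (S : CatSquare.{u}) : CatSquare.{u} :=
  ⟨S.w.op, S.v.op, S.u'.op, S.u.op, squareOpCell S.u S.u' S.v S.w S.α⟩

/-- The comma square associated with `u : A ⥤ B` and `w : B' ⥤ B`. -/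
def commaSquare {A B B' : Type u} [SmallCategory A] [SmallCategory B] [SmallCategory B']
    (u : A ⥤ B) (w : B' ⥤ B) : CatSquare.{u} :=
  ⟨u, Comma.snd u w, Comma.fst u w, w, Comma.natTrans u w⟩

/-- The comma square `D^g_{u, b}` of `u : A ⥤ B` at an object `b : B`. -/
def commaObjSquare {A B : Type u} [SmallCategory A] [SmallCategory B] (u : A ⥤ B) (b : B) :
    CatSquare.{u} :=
  commaSquare u (Functor.fromPUnit.{u} b)

/-- The dual comma square `D^d_{v, a}` of `v : A' ⥤ A` at an object `a : A`. -/
def commaObjSquareD {A' A : Type u} [SmallCategory A'] [SmallCategory A] (v : A' ⥤ A)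
    (a : A) : CatSquare.{u} :=
  commaSquare (Functor.fromPUnit.{u} a) v

/-- The square with top edge `F : A ⥤ B`, the canonical functors `A ⥤ e`, `B ⥤ e` as
vertical edges, identity bottom edge and identity `2`-cell. -/
def starSquare {A B : Type u} [SmallCategory A] [SmallCategory B] (F : A ⥤ B) :
    CatSquare.{u} :=
  ⟨Functor.star B, Functor.star A, F, 𝟭 (PtCat.{u}), 𝟙 (F ⋙ Functor.star B)⟩

/-- The square with all four corners of the form `(A, e, e, e)`, canonical edges and
identity `2`-cell. -/
def ptSquare (A : Type u) [SmallCategory A] : CatSquare.{u} :=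
  ⟨𝟭 (PtCat.{u}), Functor.star A, Functor.star A, 𝟭 (PtCat.{u}), 𝟙 (Functor.star A)⟩

/-- `Q` is stable under horizontal composition of squares (condition CS1h). -/
def StableHComp (Q : CatSquare.{u} → Prop) : Prop :=
  ∀ {A A' A'' B B' B'' : Type u}
    [SmallCategory A] [SmallCategory A'] [SmallCategory A'']
    [SmallCategory B] [SmallCategory B'] [SmallCategory B'']
    (u : A ⥤ B) (u' : A' ⥤ B') (u'' : A'' ⥤ B'')
    (v : A' ⥤ A) (w : B' ⥤ B) (v' : A'' ⥤ A') (w' : B'' ⥤ B')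
    (α : v ⋙ u ⟶ u' ⋙ w) (α' : v' ⋙ u' ⟶ u'' ⋙ w'),
    Q ⟨u, u', v, w, α⟩ → Q ⟨u', u'', v', w', α'⟩ →
    Q ⟨u, u'', v' ⋙ v, w' ⋙ w, hcomp2cell α α'⟩

/-- `Q` is stable under vertical composition of squares (condition CS1v). -/
def StableVComp (Q : CatSquare.{u} → Prop) : Prop :=
  ∀ {A A' B B' C C' : Type u}
    [SmallCategory A] [SmallCategory A'] [SmallCategory B] [SmallCategory B']
    [SmallCategory C] [SmallCategory C']
    (u : A ⥤ B) (u' : A' ⥤ B') (v : A' ⥤ A) (w : B' ⥤ B)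
    (x : B ⥤ C) (x' : B' ⥤ C') (y : C' ⥤ C)
    (α : v ⋙ u ⟶ u' ⋙ w) (β : w ⋙ x ⟶ x' ⋙ y),
    Q ⟨u, u', v, w, α⟩ → Q ⟨x, x', w, y, β⟩ →
    Q ⟨u ⋙ x, u' ⋙ x', v, y, vcomp2cell α β⟩

/-- `Q` satisfies horizontal descent (condition CS2h). -/
def HorizontalDescent (Q : CatSquare.{u} → Prop) : Prop :=
  ∀ {A A' B B' : Type u}
    [SmallCategory A] [SmallCategory A'] [SmallCategory B] [SmallCategory B']
    (u : A ⥤ B) (u' : A' ⥤ B') (v : A' ⥤ A) (w : B' ⥤ B) (α : v ⋙ u ⟶ u' ⋙ w)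
    (J : Type u) (Aj Bj : J → Type u)
    [∀ j, SmallCategory (Aj j)] [∀ j, SmallCategory (Bj j)]
    (uj : ∀ j, Aj j ⥤ Bj j) (vj : ∀ j, Aj j ⥤ A') (wj : ∀ j, Bj j ⥤ B')
    (αj : ∀ j, vj j ⋙ u' ⟶ uj j ⋙ wj j),
    (∀ b' : B', ∃ j, ∃ b : Bj j, (wj j).obj b = b') →
    (∀ j, Q ⟨u', uj j, vj j, wj j, αj j⟩) →
    (∀ j, Q ⟨u, uj j, vj j ⋙ v, wj j ⋙ w, hcomp2cell α (αj j)⟩) →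
    Q ⟨u, u', v, w, α⟩

/-- `Q` satisfies local descent (condition CS3h). -/
def LocalDescent (Q : CatSquare.{u} → Prop) : Prop :=
  ∀ {A A' B B' : Type u}
    [SmallCategory A] [SmallCategory A'] [SmallCategory B] [SmallCategory B']
    (u : A ⥤ B) (u' : A' ⥤ B') (v : A' ⥤ A) (w : B' ⥤ B) (α : v ⋙ u ⟶ u' ⋙ w),
    (∀ b' : B', Q ⟨u, Comma.snd u' (Functor.fromPUnit.{u} b'),
        Comma.fst u' (Functor.fromPUnit.{u} b') ⋙ v, Functor.fromPUnit.{u} b' ⋙ w,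
        hcomp2cell α (Comma.natTrans u' (Functor.fromPUnit.{u} b'))⟩) →
    Q ⟨u, u', v, w, α⟩

/-- `Q` satisfies colocal descent (condition CS3v). -/
def ColocalDescent (Q : CatSquare.{u} → Prop) : Prop :=
  ∀ {A A' B B' : Type u}
    [SmallCategory A] [SmallCategory A'] [SmallCategory B] [SmallCategory B']
    (u : A ⥤ B) (u' : A' ⥤ B') (v : A' ⥤ A) (w : B' ⥤ B) (α : v ⋙ u ⟶ u' ⋙ w),
    (∀ a : A, Q ⟨Functor.fromPUnit.{u} a ⋙ u,
        Comma.snd (Functor.fromPUnit.{u} a) v ⋙ u',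
        Comma.fst (Functor.fromPUnit.{u} a) v, w,
        vcomp2cell (Comma.natTrans (Functor.fromPUnit.{u} a) v) α⟩) →
    Q ⟨u, u', v, w, α⟩

/-- `Q` is stable under passing to opposite squares (condition CS4). -/
def OpStable (Q : CatSquare.{u} → Prop) : Prop :=
  ∀ S : CatSquare.{u}, Q S → Q S.op

/-- Isomorphism of squares. -/
def CatSquare.Isomorphic (S T : CatSquare.{u}) : Prop :=
  ∃ (eA' : S.A' ⥤ T.A') (eA : S.A ⥤ T.A) (eB' : S.B' ⥤ T.B') (eB : S.B ⥤ T.B)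
    (_ : IsCatIso eA') (_ : IsCatIso eA) (_ : IsCatIso eB') (_ : IsCatIso eB)
    (hv : S.v ⋙ eA = eA' ⋙ T.v) (hu : S.u ⋙ eB = eA ⋙ T.u)
    (hu' : S.u' ⋙ eB' = eA' ⋙ T.u') (hw : S.w ⋙ eB = eB' ⋙ T.w),
    Functor.whiskerRight S.α eB =
      eqToHom (by rw [Functor.assoc, hu, ← Functor.assoc, hv, Functor.assoc]) ≫
        Functor.whiskerLeft eA' T.α ≫
        eqToHom (by rw [← Functor.assoc, ← hu', Functor.assoc, ← hw, ← Functor.assoc])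

/-- A bundled square is a right Beck–Chevalley square. -/
def CatSquare.IsRightBC (S : CatSquare.{u}) : Prop :=
  ∃ (v'' : S.A ⥤ S.A') (w'' : S.B ⥤ S.B') (adjv : v'' ⊣ S.v) (adjw : w'' ⊣ S.w),
    IsIso (baseChangeL adjv adjw S.α)

/-- The functor `A/b ⥤ B/b` induced by `u : A ⥤ B`, in terms of comma categories. -/
def commaSliceInduced {A B : Type u} [SmallCategory A] [SmallCategory B] (u : A ⥤ B)
    (b : B) : Comma u (Functor.fromPUnit.{u} b) ⥤ Comma (𝟭 B) (Functor.fromPUnit.{u} b) where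
  obj x := { left := u.obj x.left, right := x.right, hom := x.hom }
  map {x y} f := { left := u.map f.left, right := f.right, w := by simp [f.w] }

/-- The cartesian square expressing `A/b` as the pullback of `u : A ⥤ B` along the
forgetful functor `B/b ⥤ B`. -/
def sliceCartSquare {A B : Type u} [SmallCategory A] [SmallCategory B] (u : A ⥤ B)
    (b : B) : CatSquare.{u} :=
  ⟨u, commaSliceInduced u b, Comma.fst u (Functor.fromPUnit.{u} b),
    Comma.fst (𝟭 B) (Functor.fromPUnit.{u} b),
    𝟙 (Comma.fst u (Functor.fromPUnit.{u} b) ⋙ u)⟩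

/-!
A square is `W`-exact when its slice functors `A'/b' ⥤ A/w(b')` are `W`-coaspherical, and
horizontal pasting composes these functors. Coaspherical functors compose once we know they lie
in `W`, which is the self-duality of `W`: the projections of the twisted arrow category of `A`
to `A` and to `Aᵒᵖ` are aspherical, naturally in `A`. Asphericity is checked throughout by
contractions `𝟭 ⟶ ρ ⟵ const`, through homotopy invariance of `W` (from the cylinder `C × [1]`)
and the retract axiom.

Conversely, for an exact square `D` and `b' : B'`, pasting `D` with the comma square `D^g_{u',b'}`
gives the pasting of the comma square of `u` and `w(b')` with the star square of the coaspherical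
functor `A'/b' ⥤ A/w(b')`, so local descent puts `D` into every class with the four properties.
-/

section Cylinder

variable {C D : Type u} [SmallCategory C] [SmallCategory D]

def NatTrans.cylinder {F G : C ⥤ D} (η : F ⟶ G) : C × Fin 2 ⥤ D :=
  Functor.uncurry.obj
    { obj c := ComposableArrows.mk₁ (η.app c)
      map f := ComposableArrows.homMk₁ (F.map f) (G.map f) (η.naturality f).symm
      map_id c := by ext; exacts [F.map_id c, G.map_id c]
      map_comp f g := by ext; exacts [F.map_comp f g, G.map_comp f g] }

theorem NatTrans.sectL_zero_comp_cylinder {F G : C ⥤ D} (η : F ⟶ G) :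
    Prod.sectL C (0 : Fin 2) ⋙ NatTrans.cylinder η = F :=
  CategoryTheory.Functor.ext (fun _ => rfl) fun _ _ _ => by
    simp [NatTrans.cylinder, Functor.uncurry]
    erw [CategoryTheory.Functor.map_id, Category.comp_id]
    exact (Category.id_comp _).symm

theorem NatTrans.sectL_one_comp_cylinder {F G : C ⥤ D} (η : F ⟶ G) :
    Prod.sectL C (1 : Fin 2) ⋙ NatTrans.cylinder η = G :=
  CategoryTheory.Functor.ext (fun _ => rfl) fun _ _ _ => by
    simp [NatTrans.cylinder, Functor.uncurry]
    erw [CategoryTheory.Functor.map_id, Category.comp_id]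
    exact (Category.id_comp _).symm

def sectLZeroAdjunction : Prod.sectL C (0 : Fin 2) ⊣ CategoryTheory.Prod.fst C (Fin 2) :=
  Adjunction.mkOfHomEquiv
    { homEquiv _ _ :=
        { toFun f := f.1
          invFun g := (g, homOfLE (Fin.zero_le _))
          left_inv f := Prod.ext rfl (Subsingleton.elim _ _)
          right_inv _ := rfl } }

end Cylinder

namespace IsWeakFundamentalLocalizer

variable {W : FunctorClass.{u}} {A B C D : Type u} [SmallCategory A] [SmallCategory B]
  [SmallCategory C] [SmallCategory D]

theorem mem_comp_iff_of_mem_left (hW : IsWeakFundamentalLocalizer W) {F : A ⥤ B} (G : B ⥤ C)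
    (hF : W F) : W (F ⋙ G) ↔ W G :=
  ⟨hW.of_comp_left F G hF, hW.comp_mem F G hF⟩

theorem isAsphericalCat_iff_of_mem (hW : IsWeakFundamentalLocalizer W) {F : A ⥤ B} (hF : W F) :
    IsAsphericalCat W A ↔ IsAsphericalCat W B :=
  hW.mem_comp_iff_of_mem_left _ hF

theorem mem_of_isAsphericalCat (hW : IsWeakFundamentalLocalizer W) (F : A ⥤ B)
    (hA : IsAsphericalCat W A) (hB : IsAsphericalCat W B) : W F :=
  hW.of_comp_right F _ hB hA

theorem mem_of_isAsphericalFunctor (hW : IsWeakFundamentalLocalizer W) {F : A ⥤ B}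
    (hF : IsAsphericalFunctor W F) : W F :=
  hW.mem_of_slices F fun b =>
    hW.mem_of_isAsphericalCat _ (hF b) (hW.star_mem _ Over.mkIdTerminal.hasTerminal)

theorem mem_of_isLeftAdjoint (hW : IsWeakFundamentalLocalizer W) (F : A ⥤ B)
    [F.IsLeftAdjoint] : W F :=
  hW.mem_of_isAsphericalFunctor fun b =>
    hW.star_mem _ (isLeftAdjoint_iff_hasTerminal_costructuredArrow.mp inferInstance b)

theorem isAsphericalCat_iff_of_isEquivalence (hW : IsWeakFundamentalLocalizer W) (F : A ⥤ B)
    [F.IsEquivalence] : IsAsphericalCat W A ↔ IsAsphericalCat W B :=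
  hW.isAsphericalCat_iff_of_mem (hW.mem_of_isLeftAdjoint F)

/-- Both ends of the cylinder `C × [1]` are sections of the projection, which lies in `W` as the
right adjoint of the end at `0`. -/
theorem mem_iff_of_natTrans (hW : IsWeakFundamentalLocalizer W) {F G : C ⥤ D} (η : F ⟶ G) :
    W F ↔ W G := by
  have h₀ : W (Prod.sectL C (0 : Fin 2)) :=
    have := (sectLZeroAdjunction (C := C)).isLeftAdjoint
    hW.mem_of_isLeftAdjoint _
  have hfst : W (CategoryTheory.Prod.fst C (Fin 2)) := hW.of_comp_left _ _ h₀ (hW.id_mem C)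
  have h₁ : W (Prod.sectL C (1 : Fin 2)) := hW.of_comp_right _ _ hfst (hW.id_mem C)
  calc W F ↔ W (Prod.sectL C (0 : Fin 2) ⋙ NatTrans.cylinder η) := by
        rw [NatTrans.sectL_zero_comp_cylinder]
    _ ↔ W (Prod.sectL C (1 : Fin 2) ⋙ NatTrans.cylinder η) := by
        rw [hW.mem_comp_iff_of_mem_left _ h₀, hW.mem_comp_iff_of_mem_left _ h₁]
    _ ↔ W G := by rw [NatTrans.sectL_one_comp_cylinder]

theorem isAsphericalCat_of_const_mem (hW : IsWeakFundamentalLocalizer W) (c : C)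
    (h : W ((Functor.const C).obj c)) : IsAsphericalCat W C :=
  hW.retract_mem (Functor.fromPUnit.{u} c) (Functor.star C) (Functor.punit_ext' _ _) h

theorem isAsphericalCat_of_natTrans (hW : IsWeakFundamentalLocalizer W) {ρ : C ⥤ C} {c : C}
    (ε : 𝟭 C ⟶ ρ) (κ : (Functor.const C).obj c ⟶ ρ) : IsAsphericalCat W C :=
  hW.isAsphericalCat_of_const_mem c
    ((hW.mem_iff_of_natTrans κ).mpr ((hW.mem_iff_of_natTrans ε).mp (hW.id_mem C)))

end IsWeakFundamentalLocalizer

structure TwistedArrow (C : Type u) [SmallCategory C] : Type u where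
  src : C
  tgt : C
  hom : src ⟶ tgt

namespace TwistedArrow

variable {C D : Type u} [SmallCategory C] [SmallCategory D]

@[ext]
structure Hom (X Y : TwistedArrow C) : Type u where
  src : Y.src ⟶ X.src
  tgt : X.tgt ⟶ Y.tgt
  w : src ≫ X.hom ≫ tgt = Y.hom

instance : SmallCategory (TwistedArrow C) where
  Hom := Hom
  id X := ⟨𝟙 X.src, 𝟙 X.tgt, by simp⟩
  comp f g := ⟨g.src ≫ f.src, f.tgt ≫ g.tgt, by rw [← g.w, ← f.w]; simp only [Category.assoc]⟩

@[ext]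
theorem hom_ext {X Y : TwistedArrow C} {f g : X ⟶ Y} (hs : f.src = g.src) (ht : f.tgt = g.tgt) :
    f = g :=
  Hom.ext hs ht

@[simp] theorem id_src (X : TwistedArrow C) : Hom.src (𝟙 X) = 𝟙 X.src := rfl
@[simp] theorem id_tgt (X : TwistedArrow C) : Hom.tgt (𝟙 X) = 𝟙 X.tgt := rfl
@[simp] theorem comp_src {X Y Z : TwistedArrow C} (f : X ⟶ Y) (g : Y ⟶ Z) :
    (f ≫ g).src = g.src ≫ f.src := rfl
@[simp] theorem comp_tgt {X Y Z : TwistedArrow C} (f : X ⟶ Y) (g : Y ⟶ Z) :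
    (f ≫ g).tgt = f.tgt ≫ g.tgt := rfl

variable (C) in
abbrev tgtFunctor : TwistedArrow C ⥤ C where
  obj X := X.tgt
  map f := f.tgt

variable (C) in
abbrev srcFunctor : TwistedArrow C ⥤ Cᵒᵖ where
  obj X := Opposite.op X.src
  map f := f.src.op

def map (F : C ⥤ D) : TwistedArrow C ⥤ TwistedArrow D where
  obj X := ⟨F.obj X.src, F.obj X.tgt, F.map X.hom⟩
  map f := ⟨F.map f.src, F.map f.tgt, by simp only [← F.map_comp, f.w]⟩

abbrev tgtSliceRetraction (c : C) :
    CostructuredArrow (tgtFunctor C) c ⥤ CostructuredArrow (tgtFunctor C) c where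
  obj X := CostructuredArrow.mk (Y := mk X.left.src c (X.left.hom ≫ X.hom)) (𝟙 c)
  map f := CostructuredArrow.homMk ⟨f.left.src, 𝟙 c, by
    rw [← f.left.w, ← CostructuredArrow.w f]; simp⟩

/-- In the slice over `c`, the object `x ⟶ y ⟶ c` maps to `(x ⟶ c, 𝟙 c)`, which also receives
a map from `(𝟙 c, 𝟙 c)`. -/
theorem isAsphericalFunctor_tgtFunctor {W : FunctorClass.{u}} (hW : IsWeakFundamentalLocalizer W) :
    IsAsphericalFunctor W (tgtFunctor C) := fun c =>
  hW.isAsphericalCat_of_natTrans (ρ := tgtSliceRetraction c)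
    (c := CostructuredArrow.mk (Y := mk c c (𝟙 c)) (𝟙 c))
    { app X := CostructuredArrow.homMk
        (⟨𝟙 X.left.src, X.hom, by simp⟩ : X.left ⟶ mk X.left.src c (X.left.hom ≫ X.hom))
      naturality _ _ f := by
        apply CostructuredArrow.hom_ext
        ext
        · simp
        · simpa using CostructuredArrow.w f }
    { app X := CostructuredArrow.homMk
        (⟨X.left.hom ≫ X.hom, 𝟙 c, by simp⟩ : mk c c (𝟙 c) ⟶ mk X.left.src c (X.left.hom ≫ X.hom))
      naturality _ _ f := by
        apply CostructuredArrow.hom_ext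
        ext
        · simp [← f.left.w, ← CostructuredArrow.w f]
        · simp }

abbrev srcSliceRetraction (e : C) :
    CostructuredArrow (srcFunctor C) (Opposite.op e) ⥤
      CostructuredArrow (srcFunctor C) (Opposite.op e) where
  obj X := CostructuredArrow.mk (Y := mk e X.left.tgt (X.hom.unop ≫ X.left.hom)) (𝟙 _)
  map f := CostructuredArrow.homMk ⟨𝟙 e, f.left.tgt, by
    rw [← f.left.w, ← CostructuredArrow.w f]; simp⟩

/-- Dually, `e ⟶ x ⟶ y` maps to `(e ⟶ y, 𝟙 e)`, which receives a map from `(𝟙 e, 𝟙 e)`. -/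
theorem isAsphericalFunctor_srcFunctor {W : FunctorClass.{u}} (hW : IsWeakFundamentalLocalizer W) :
    IsAsphericalFunctor W (srcFunctor C) := fun ⟨e⟩ =>
  hW.isAsphericalCat_of_natTrans (ρ := srcSliceRetraction e)
    (c := CostructuredArrow.mk (Y := mk e e (𝟙 e)) (𝟙 _))
    { app X := CostructuredArrow.homMk
        (⟨X.hom.unop, 𝟙 X.left.tgt, by simp⟩ : X.left ⟶ mk e X.left.tgt (X.hom.unop ≫ X.left.hom))
      naturality _ _ f := by
        apply CostructuredArrow.hom_ext
        ext
        · simpa using congrArg Quiver.Hom.unop (CostructuredArrow.w f)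
        · simp }
    { app X := CostructuredArrow.homMk
        (⟨𝟙 e, X.hom.unop ≫ X.left.hom, by simp⟩ :
          mk e e (𝟙 e) ⟶ mk e X.left.tgt (X.hom.unop ≫ X.left.hom))
      naturality _ _ f := by
        apply CostructuredArrow.hom_ext
        ext
        · simp
        · simp [← f.left.w, ← CostructuredArrow.w f] }

end TwistedArrow

namespace IsWeakFundamentalLocalizer

variable {W : FunctorClass.{u}} {A B C : Type u} [SmallCategory A] [SmallCategory B]
  [SmallCategory C]

/-- `TwistedArrow.map F` lies over both `F` and `F.op`, through projections that lie in `W`. -/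
theorem mem_of_mem_op (hW : IsWeakFundamentalLocalizer W) {F : A ⥤ B} (h : W F.op) : W F := by
  have hsrc (C : Type u) [SmallCategory C] : W (TwistedArrow.srcFunctor C) :=
    hW.mem_of_isAsphericalFunctor (TwistedArrow.isAsphericalFunctor_srcFunctor hW)
  have htgt (C : Type u) [SmallCategory C] : W (TwistedArrow.tgtFunctor C) :=
    hW.mem_of_isAsphericalFunctor (TwistedArrow.isAsphericalFunctor_tgtFunctor hW)
  have hmap : W (TwistedArrow.map F) :=
    hW.of_comp_right _ _ (hsrc B) (hW.comp_mem (TwistedArrow.srcFunctor A) F.op (hsrc A) h)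
  exact hW.of_comp_left (TwistedArrow.tgtFunctor A) F (htgt A)
    (hW.comp_mem (TwistedArrow.map F) _ hmap (htgt B))

theorem isAsphericalCat_op (hW : IsWeakFundamentalLocalizer W) (h : IsAsphericalCat W A) :
    IsAsphericalCat W Aᵒᵖ :=
  hW.mem_of_mem_op <| hW.mem_of_isAsphericalCat _
    ((hW.isAsphericalCat_iff_of_isEquivalence (opOpEquivalence A).functor).mpr h)
    (hW.star_mem _ inferInstance)

theorem mem_of_isCoasphericalFunctor (hW : IsWeakFundamentalLocalizer W) {F : A ⥤ B}
    (hF : IsCoasphericalFunctor W F) : W F :=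
  hW.mem_of_mem_op <| hW.mem_of_isAsphericalFunctor fun b =>
    (hW.isAsphericalCat_iff_of_isEquivalence (structuredArrowOpEquivalence F b.unop).functor).mp
      (hW.isAsphericalCat_op (hF b.unop))

theorem isCoasphericalFunctor_comp (hW : IsWeakFundamentalLocalizer W) {F : A ⥤ B} {G : B ⥤ C}
    (hF : IsCoasphericalFunctor W F) (hG : IsCoasphericalFunctor W G) :
    IsCoasphericalFunctor W (F ⋙ G) := fun c =>
  have hpre : W (StructuredArrow.pre c F G) := hW.mem_of_isCoasphericalFunctor fun y =>
    (hW.isAsphericalCat_iff_of_isEquivalence (StructuredArrow.preEquivalence F y).functor).mpr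
      (hF y.right)
  (hW.isAsphericalCat_iff_of_mem hpre).mpr (hG c)

theorem isCoasphericalFunctor_comp_iff_left (hW : IsWeakFundamentalLocalizer W) (E : A ⥤ B)
    [E.IsEquivalence] (F : B ⥤ C) :
    IsCoasphericalFunctor W (E ⋙ F) ↔ IsCoasphericalFunctor W F :=
  forall_congr' fun c => hW.isAsphericalCat_iff_of_isEquivalence (StructuredArrow.pre c E F)

theorem isCoasphericalFunctor_of_comp_right (hW : IsWeakFundamentalLocalizer W) (F : A ⥤ B)
    (E : B ⥤ C) [E.Full] [E.Faithful] (h : IsCoasphericalFunctor W (F ⋙ E)) :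
    IsCoasphericalFunctor W F := fun b =>
  (hW.isAsphericalCat_iff_of_isEquivalence (StructuredArrow.post b F E)).mpr (h (E.obj b))

end IsWeakFundamentalLocalizer

section PtCat

variable {A B : Type u} [SmallCategory A] [SmallCategory B]

instance isEquivalence_costructuredArrow_proj_ptCat (F : A ⥤ PtCat.{u}) (b : PtCat.{u}) :
    (CostructuredArrow.proj F b).IsEquivalence where
  full := ⟨fun g => ⟨CostructuredArrow.homMk g (Subsingleton.elim _ _), rfl⟩⟩
  essSurj := ⟨fun a => ⟨CostructuredArrow.mk (Y := a) (𝟙 b), ⟨Iso.refl _⟩⟩⟩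

theorem Comma.hom_comp_map_ptCat {u : A ⥤ B} {R : PtCat.{u} ⥤ B} (X : Comma u R) {y : PtCat.{u}}
    (φ : X.right ⟶ y) : (X.hom ≫ R.map φ : u.obj X.left ⟶ R.obj ⟨⟨⟩⟩) = X.hom := by
  obtain ⟨_, ⟨⟨⟩⟩, _⟩ := X
  obtain ⟨⟨⟩⟩ := y
  simp

/-- Mathlib's `CostructuredArrow u b` is `Comma u (Functor.fromPUnit.{0} b)`, while the comma
squares of the paper use the point category `PtCat.{u}`; the two models are equivalent. -/
def Comma.toCostructuredArrow (u : A ⥤ B) (R : PtCat.{u} ⥤ B) :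
    Comma u R ⥤ CostructuredArrow u (R.obj ⟨⟨⟩⟩) where
  obj m := CostructuredArrow.mk m.hom
  map f := CostructuredArrow.homMk f.left (f.w.trans (Comma.hom_comp_map_ptCat _ f.right))

instance Comma.isEquivalence_toCostructuredArrow (u : A ⥤ B) (R : PtCat.{u} ⥤ B) :
    (Comma.toCostructuredArrow u R).IsEquivalence where
  faithful := ⟨fun h => Comma.hom_ext _ _ (congrArg (·.left) h) (Subsingleton.elim _ _)⟩
  full := ⟨fun {X _} g => ⟨⟨g.left, 𝟙 X.right,
    (CostructuredArrow.w g).trans (Comma.hom_comp_map_ptCat X _).symm⟩, rfl⟩⟩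
  essSurj := ⟨fun X => ⟨⟨X.left, ⟨⟨⟩⟩, X.hom⟩, ⟨Iso.refl _⟩⟩⟩

end PtCat

section ExactSquares

variable {W : FunctorClass.{u}} {A A' A'' B B' B'' : Type u} [SmallCategory A] [SmallCategory A']
  [SmallCategory A''] [SmallCategory B] [SmallCategory B'] [SmallCategory B'']

theorem squareSlice_hcomp (u : A ⥤ B) (u' : A' ⥤ B') (u'' : A'' ⥤ B'') (v : A' ⥤ A) (w : B' ⥤ B)
    (v' : A'' ⥤ A') (w' : B'' ⥤ B') (α : v ⋙ u ⟶ u' ⋙ w) (α' : v' ⋙ u' ⟶ u'' ⋙ w') (b'' : B'') :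
    squareSlice u u'' (v' ⋙ v) (w' ⋙ w) (hcomp2cell α α') b'' =
      squareSlice u' u'' v' w' α' b'' ⋙ squareSlice u u' v w α (w'.obj b'') :=
  CategoryTheory.Functor.ext
    (fun _ => congrArg CostructuredArrow.mk (by simp [hcomp2cell, squareSlice])) fun _ _ _ => by
      apply CostructuredArrow.hom_ext
      simp [squareSlice]
      erw [CostructuredArrow.eqToHom_left, CostructuredArrow.eqToHom_left]
      simp

theorem isExactSquare_hcomp (hW : IsWeakFundamentalLocalizer W) {u : A ⥤ B} {u' : A' ⥤ B'}
    {u'' : A'' ⥤ B''} {v : A' ⥤ A} {w : B' ⥤ B} {v' : A'' ⥤ A'} {w' : B'' ⥤ B'}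
    {α : v ⋙ u ⟶ u' ⋙ w} {α' : v' ⋙ u' ⟶ u'' ⋙ w'} (h : IsExactSquare W u u' v w α)
    (h' : IsExactSquare W u' u'' v' w' α') :
    IsExactSquare W u u'' (v' ⋙ v) (w' ⋙ w) (hcomp2cell α α') := fun b'' => by
  rw [squareSlice_hcomp]
  exact hW.isCoasphericalFunctor_comp (h' b'') (h (w'.obj b''))

theorem isEquivalence_squareSlice_commaObjSquare (u : A ⥤ B) (b : B) :
    (squareSlice u (Comma.snd u (Functor.fromPUnit.{u} b)) (Comma.fst u (Functor.fromPUnit.{u} b))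
      (Functor.fromPUnit.{u} b) (Comma.natTrans u (Functor.fromPUnit.{u} b)) ⟨⟨⟩⟩).IsEquivalence :=
  Functor.isEquivalence_of_iso
    (F := CostructuredArrow.proj _ _ ⋙ Comma.toCostructuredArrow u (Functor.fromPUnit.{u} b))
    (NatIso.ofComponents
      (fun _ => CostructuredArrow.isoMk (Iso.refl _) (by
        erw [u.map_id, Category.id_comp]
        exact Category.comp_id _))
      fun _ => CostructuredArrow.hom_ext _ _ ((Category.comp_id _).trans (Category.id_comp _).symm))

theorem isExactSquare_of_hcomp_commaObjSquare (hW : IsWeakFundamentalLocalizer W) {u : A ⥤ B}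
    {u' : A' ⥤ B'} {v : A' ⥤ A} {w : B' ⥤ B} {α : v ⋙ u ⟶ u' ⋙ w}
    (h : ∀ b' : B', IsExactSquare W u (Comma.snd u' (Functor.fromPUnit.{u} b'))
      (Comma.fst u' (Functor.fromPUnit.{u} b') ⋙ v) (Functor.fromPUnit.{u} b' ⋙ w)
      (hcomp2cell α (Comma.natTrans u' (Functor.fromPUnit.{u} b')))) :
    IsExactSquare W u u' v w α := fun b' => by
  have hb' := h b' ⟨⟨⟩⟩
  rw [squareSlice_hcomp] at hb'
  have := isEquivalence_squareSlice_commaObjSquare u' b'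
  exact (hW.isCoasphericalFunctor_comp_iff_left _ _).mp hb'

theorem isExactSquare_starSquare (hW : IsWeakFundamentalLocalizer W) {F : A ⥤ B}
    (hF : IsCoasphericalFunctor W F) :
    IsExactSquare W (Functor.star B) (Functor.star A) F (𝟭 PtCat.{u}) (𝟙 _) := fun b' =>
  hW.isCoasphericalFunctor_of_comp_right _ (CostructuredArrow.proj (Functor.star B) b')
    ((hW.isCoasphericalFunctor_comp_iff_left (CostructuredArrow.proj (Functor.star A) b') F).mpr hF)

end ExactSquares

section CommaSquare

variable {A B B' : Type u} [SmallCategory A] [SmallCategory B] [SmallCategory B']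

abbrev commaSquareSlice (u : A ⥤ B) (w : B' ⥤ B) (b' : B') :
    CostructuredArrow (Comma.snd u w) b' ⥤ CostructuredArrow u (w.obj b') where
  obj X := CostructuredArrow.mk (Y := X.left.left) (X.left.hom ≫ w.map X.hom)
  map f := CostructuredArrow.homMk f.left.left (by
    rw [← CostructuredArrow.w f]; simp [reassoc_of% f.left.w])
  map_id _ := rfl
  map_comp _ _ := rfl

theorem squareSlice_commaSquare (u : A ⥤ B) (w : B' ⥤ B) (b' : B') :
    squareSlice u (Comma.snd u w) (Comma.fst u w) w (Comma.natTrans u w) b' =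
      commaSquareSlice u w b' :=
  rfl

abbrev commaSquareCosliceRetraction (u : A ⥤ B) (w : B' ⥤ B) (b' : B')
    (x : CostructuredArrow u (w.obj b')) :
    StructuredArrow x (commaSquareSlice u w b') ⥤ StructuredArrow x (commaSquareSlice u w b') where
  obj q := StructuredArrow.mk
    (Y := CostructuredArrow.mk
      (Y := (⟨q.right.left.left, b', q.right.left.hom ≫ w.map q.right.hom⟩ : Comma u w)) (𝟙 b'))
    (CostructuredArrow.homMk q.hom.left (by simpa using CostructuredArrow.w q.hom))
  map φ := StructuredArrow.homMk (CostructuredArrow.homMk ⟨φ.right.left.left, 𝟙 b', by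
    simp [← CostructuredArrow.w φ.right, reassoc_of% φ.right.left.w]⟩ (Category.comp_id _)) (by
    simpa using congrArg (·.left) (StructuredArrow.w φ))
  map_id _ := rfl
  map_comp _ _ := by
    apply StructuredArrow.hom_ext
    apply CostructuredArrow.hom_ext
    exact Comma.hom_ext _ _ rfl (Category.comp_id _).symm

/-- In the coslice under `x`, the object `(a, b'', g, k : b'' ⟶ b', f : x.left ⟶ a)` maps to the
one obtained by pushing `b''` forward along `k`, which also receives a map from
`(x.left, b', x.hom)`. -/
theorem isExactSquare_commaSquare {W : FunctorClass.{u}} (hW : IsWeakFundamentalLocalizer W)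
    (u : A ⥤ B) (w : B' ⥤ B) :
    IsExactSquare W u (Comma.snd u w) (Comma.fst u w) w (Comma.natTrans u w) := fun b' => by
  rw [squareSlice_commaSquare]
  exact fun x => hW.isAsphericalCat_of_natTrans (ρ := commaSquareCosliceRetraction u w b' x)
    (c := StructuredArrow.mk (Y := CostructuredArrow.mk
      (Y := (⟨x.left, b', x.hom⟩ : Comma u w)) (𝟙 b')) (CostructuredArrow.homMk (𝟙 x.left)))
    { app q := StructuredArrow.homMk
        (CostructuredArrow.homMk ⟨𝟙 _, q.right.hom, by simp⟩ (Category.comp_id _))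
      naturality _ _ φ := by
        apply StructuredArrow.hom_ext
        apply CostructuredArrow.hom_ext
        apply Comma.hom_ext
        · simp
        · simpa using CostructuredArrow.w φ.right }
    { app q := StructuredArrow.homMk
        (CostructuredArrow.homMk ⟨q.hom.left, 𝟙 b', by simpa using CostructuredArrow.w q.hom⟩
          (Category.comp_id _))
      naturality _ _ φ := by
        apply StructuredArrow.hom_ext
        apply CostructuredArrow.hom_ext
        apply Comma.hom_ext
        · simpa using (congrArg (·.left) (StructuredArrow.w φ)).symm
        · simp }

end CommaSquare

section Decomposition

variable {A A' B B' : Type u} [SmallCategory A] [SmallCategory A'] [SmallCategory B]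
  [SmallCategory B'] (u : A ⥤ B) (u' : A' ⥤ B') (v : A' ⥤ A) (w : B' ⥤ B)
  (α : v ⋙ u ⟶ u' ⋙ w) (b' : B')

def squareSliceComma :
    Comma u' (Functor.fromPUnit.{u} b') ⥤ Comma u (Functor.fromPUnit.{u} b' ⋙ w) where
  obj m := ⟨v.obj m.left, m.right, α.app m.left ≫ w.map m.hom⟩
  map f := ⟨v.map f.left, f.right, by
    have hα := α.naturality f.left
    have hf := f.w
    dsimp at hα hf ⊢
    rw [← Category.assoc, hα, Category.assoc, ← w.map_comp, hf]
    simp⟩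

theorem squareSliceComma_comp_toCostructuredArrow :
    squareSliceComma u u' v w α b' ⋙ Comma.toCostructuredArrow u (Functor.fromPUnit.{u} b' ⋙ w) =
      Comma.toCostructuredArrow u' (Functor.fromPUnit.{u} b') ⋙ squareSlice u u' v w α b' :=
  rfl

variable {u u' v w α b'} in
theorem isCoasphericalFunctor_squareSliceComma {W : FunctorClass.{u}}
    (hW : IsWeakFundamentalLocalizer W) (h : IsCoasphericalFunctor W (squareSlice u u' v w α b')) :
    IsCoasphericalFunctor W (squareSliceComma u u' v w α b') := by
  refine hW.isCoasphericalFunctor_of_comp_right _ (Comma.toCostructuredArrow u _) ?_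
  rwa [squareSliceComma_comp_toCostructuredArrow, hW.isCoasphericalFunctor_comp_iff_left]

theorem hcomp2cell_commaNatTrans_id :
    hcomp2cell (u' := Functor.star _) (w' := 𝟭 PtCat.{u})
        (Comma.natTrans u (Functor.fromPUnit.{u} b' ⋙ w))
        (𝟙 (squareSliceComma u u' v w α b' ⋙ Functor.star _)) =
      hcomp2cell α (Comma.natTrans u' (Functor.fromPUnit.{u} b')) := by
  ext m
  show (α.app m.left ≫ w.map m.hom) ≫ w.map (𝟙 b') = α.app m.left ≫ w.map m.hom
  simp

end Decomposition

theorem statement12 (W : FunctorClass.{u}) (hW : IsWeakFundamentalLocalizer W) :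
    (StableHComp (CatSquare.IsExact W)
      ∧ LocalDescent (CatSquare.IsExact W)
      ∧ (∀ {A B B' : Type u} [SmallCategory A] [SmallCategory B] [SmallCategory B']
          (u : A ⥤ B) (w : B' ⥤ B), (commaSquare u w).IsExact W)
      ∧ (∀ {A B : Type u} [SmallCategory A] [SmallCategory B] (F : A ⥤ B),
          IsCoasphericalFunctor W F → (starSquare F).IsExact W))
    ∧ ∀ Q : CatSquare.{u} → Prop, StableHComp Q → LocalDescent Q →
        (∀ {A B B' : Type u} [SmallCategory A] [SmallCategory B] [SmallCategory B']
          (u : A ⥤ B) (w : B' ⥤ B), Q (commaSquare u w)) →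
        (∀ {A B : Type u} [SmallCategory A] [SmallCategory B] (F : A ⥤ B),
          IsCoasphericalFunctor W F → Q (starSquare F)) →
        ∀ S : CatSquare.{u}, S.IsExact W → Q S := by
  refine ⟨⟨fun _ _ _ _ _ _ _ _ _ h h' => isExactSquare_hcomp hW h h',
    fun _ _ _ _ _ h => isExactSquare_of_hcomp_commaObjSquare hW h,
    fun u w => isExactSquare_commaSquare hW u w, fun _ hF => isExactSquare_starSquare hW hF⟩, ?_⟩
  rintro Q hcomp hdesc hcomma hstar ⟨u, u', v, w, α⟩ hS
  refine hdesc u u' v w α fun b' => ?_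
  have h := hcomp _ _ _ _ _ _ _ _ _ (hcomma u (Functor.fromPUnit.{u} b' ⋙ w))
    (hstar _ (isCoasphericalFunctor_squareSliceComma hW (hS b')))
  exact hcomp2cell_commaNatTrans_id u u' v w α b' ▸ h

end Paper
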